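/- If a unitary U on n qubits satisfies e^{iθ}U = U' where both U and U' have all entries in the ring Z[1/√2, i] and U has at least one nonzero entry, then e^{iθ} ∈ Z[1/√2, i] and hence θ = kπ/4 for some integer k; in particular there are exactly 8 possible global phase factors relating two such unitaries. -/

import Mathlib

open Complex Real

/-- The ring `ℤ[1/√2, i]` viewed as a subset of `ℂ`. -/
def dyadicRing : Set ℂ :=
  {z | ∃ (a b c d : ℤ) (m : ℕ),
    z = ((a : ℂ) + (b : ℂ) * Complex.exp (Complex.I * (Real.pi / 4 : ℝ))
          + (c : ℂ) * Complex.exp (Complex.I * (Real.pi / 2 : ℝ))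
          + (d : ℂ) * Complex.exp (Complex.I * (3 * Real.pi / 4 : ℝ)))
        / (Real.sqrt (2 ^ m) : ℝ)}

/-!
Comparing row `i` of `U' = e^{iθ} U` with the same row of `U` gives
`e^{iθ} = ∑ⱼ U'ᵢⱼ · conj Uᵢⱼ`, so the phase lies in the ring, which is closed under conjugation.
With `ω = e^{iπ/4}`, a ring element is `z = (a + bω + cω² + dω³) / √2^m`, and `|z| = 1` reads
`(a² + b² + c² + d²) + (ab + bc + cd - da) √2 = 2^m`; as `√2` is irrational this is a pair of
integer equations. For `m > 0` they force `a + c` and `b + d` to be even, so the numerator is `√2`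
times another one of the same shape and `m` drops by one. At `m = 0`, `(a, b, c, d)` is a signed
unit vector, so `z = ±ωʲ`, a power of `ω`.
-/

noncomputable def ω : ℂ := Complex.exp (I * (π / 4 : ℝ))

lemma omega_pow (k : ℕ) : ω ^ k = Complex.exp (I * ((k * π / 4 : ℝ) : ℂ)) := by
  rw [ω, ← Complex.exp_nat_mul]
  push_cast
  ring_nf

lemma omega_eq : ω = (√2 / 2 : ℝ) + (√2 / 2 : ℝ) * I := by
  rw [ω, mul_comm, Complex.exp_mul_I, ← Complex.ofReal_cos, ← Complex.ofReal_sin,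
    Real.cos_pi_div_four, Real.sin_pi_div_four]

lemma sq_sqrt_two_complex : ((√2 : ℝ) : ℂ) ^ 2 = 2 := by
  rw [← Complex.ofReal_pow, Real.sq_sqrt zero_le_two]; norm_num

lemma omega_sq : ω ^ 2 = I := by
  rw [omega_eq]
  push_cast
  linear_combination (I / 2) * sq_sqrt_two_complex + ((√2 : ℂ) ^ 2 / 4) * I_sq

lemma omega_pow_four : ω ^ 4 = -1 := by
  rw [show 4 = 2 * 2 from rfl, pow_mul, omega_sq, I_sq]

lemma sqrt_two_eq_omega_sub : ((√2 : ℝ) : ℂ) = ω - ω ^ 3 := by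
  rw [pow_succ, omega_sq, omega_eq]
  push_cast
  linear_combination ((√2 : ℂ) / 2) * I_sq

lemma conj_omega : (starRingEnd ℂ) ω = -ω ^ 3 := by
  rw [pow_succ, omega_sq, omega_eq]
  simp only [map_add, map_mul, conj_ofReal, conj_I]
  push_cast
  linear_combination ((√2 : ℂ) / 2) * I_sq

noncomputable def zOmega (a b c d : ℤ) : ℂ := a + b * ω + c * ω ^ 2 + d * ω ^ 3

lemma zOmega_add (a b c d a' b' c' d' : ℤ) :
    zOmega a b c d + zOmega a' b' c' d' = zOmega (a + a') (b + b') (c + c') (d + d') := by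
  unfold zOmega; push_cast; ring

lemma neg_zOmega (a b c d : ℤ) : -zOmega a b c d = zOmega (-a) (-b) (-c) (-d) := by
  unfold zOmega; push_cast; ring

lemma zOmega_mul (a b c d a' b' c' d' : ℤ) : zOmega a b c d * zOmega a' b' c' d' =
    zOmega (a * a' - b * d' - c * c' - d * b') (a * b' + b * a' - c * d' - d * c')
      (a * c' + b * b' + c * a' - d * d') (a * d' + b * c' + c * b' + d * a') := by
  unfold zOmega
  push_cast
  linear_combination (b * d' + c * c' + d * b' + (c * d' + d * c') * ω + d * d' * ω ^ 2 : ℂ) *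
    omega_pow_four

lemma conj_zOmega (a b c d : ℤ) : (starRingEnd ℂ) (zOmega a b c d) = zOmega a (-d) (-c) (-b) := by
  unfold zOmega
  simp only [map_add, map_mul, map_pow, conj_omega, map_intCast]
  push_cast
  linear_combination (c * ω ^ 2 - d * ω * (ω ^ 4 - 1) : ℂ) * omega_pow_four

lemma sqrt_two_mul_zOmega (a b c d : ℤ) :
    ((√2 : ℝ) : ℂ) * zOmega a b c d = zOmega (b - d) (a + c) (b + d) (c - a) := by
  rw [sqrt_two_eq_omega_sub]
  unfold zOmega
  push_cast
  linear_combination (d - b - c * ω - d * ω ^ 2 : ℂ) * omega_pow_four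

lemma zOmega_mul_conj (a b c d : ℤ) :
    zOmega a b c d * (starRingEnd ℂ) (zOmega a b c d) =
      ((a ^ 2 + b ^ 2 + c ^ 2 + d ^ 2 : ℤ) : ℂ)
        + ((a * b + b * c + c * d - d * a : ℤ) : ℂ) * (√2 : ℝ) := by
  rw [conj_zOmega, zOmega_mul, sqrt_two_eq_omega_sub]
  unfold zOmega
  push_cast
  ring

lemma sqrt_two_pow_ne_zero (m : ℕ) : ((√2 : ℝ) : ℂ) ^ m ≠ 0 :=
  pow_ne_zero m (Complex.ofReal_ne_zero.mpr (Real.sqrt_pos.mpr two_pos).ne')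

lemma mem_dyadicRing_iff {z : ℂ} :
    z ∈ dyadicRing ↔ ∃ (a b c d : ℤ) (m : ℕ), ((√2 : ℝ) : ℂ) ^ m * z = zOmega a b c d := by
  have hsqrt (m : ℕ) : ((√(2 ^ m) : ℝ) : ℂ) = ((√2 : ℝ) : ℂ) ^ m := by
    rw [← Complex.ofReal_pow, ← Real.sqrt_sq (by positivity : 0 ≤ √2 ^ m), ← pow_mul,
      mul_comm, pow_mul, Real.sq_sqrt zero_le_two]
  have hterm (a b c d : ℤ) : (a : ℂ) + b * Complex.exp (I * (π / 4 : ℝ))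
      + c * Complex.exp (I * (π / 2 : ℝ)) + d * Complex.exp (I * (3 * π / 4 : ℝ))
        = zOmega a b c d := by
    rw [zOmega, omega_pow 2, omega_pow 3, ω]
    push_cast
    ring_nf
  simp only [dyadicRing, Set.mem_ofPred_eq, hsqrt, hterm]
  refine exists₅_congr fun a b c d m => ?_
  rw [eq_div_iff (sqrt_two_pow_ne_zero m), mul_comm]

lemma exists_sqrt_two_pow_mul_eq_zOmega (k : ℕ) (a b c d : ℤ) :
    ∃ a' b' c' d' : ℤ, ((√2 : ℝ) : ℂ) ^ k * zOmega a b c d = zOmega a' b' c' d' := by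
  induction k generalizing a b c d with
  | zero => exact ⟨a, b, c, d, one_mul _⟩
  | succ k ih =>
    obtain ⟨a', b', c', d', h⟩ := ih (b - d) (a + c) (b + d) (c - a)
    exact ⟨a', b', c', d', by rw [pow_succ, mul_assoc, sqrt_two_mul_zOmega, h]⟩

noncomputable def dyadicSubring : Subring ℂ where
  carrier := dyadicRing
  zero_mem' := mem_dyadicRing_iff.2 ⟨0, 0, 0, 0, 0, by simp [zOmega]⟩
  one_mem' := mem_dyadicRing_iff.2 ⟨1, 0, 0, 0, 0, by simp [zOmega]⟩
  add_mem' := by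
    rintro z w hz hw
    obtain ⟨a, b, c, d, m, hm⟩ := mem_dyadicRing_iff.1 hz
    obtain ⟨a', b', c', d', l, hl⟩ := mem_dyadicRing_iff.1 hw
    obtain ⟨a₁, b₁, c₁, d₁, h₁⟩ := exists_sqrt_two_pow_mul_eq_zOmega l a b c d
    obtain ⟨a₂, b₂, c₂, d₂, h₂⟩ := exists_sqrt_two_pow_mul_eq_zOmega m a' b' c' d'
    have h : ((√2 : ℝ) : ℂ) ^ (m + l) * (z + w) = zOmega a₁ b₁ c₁ d₁ + zOmega a₂ b₂ c₂ d₂ := by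
      rw [← h₁, ← h₂, ← hm, ← hl, pow_add]
      ring
    rw [zOmega_add] at h
    exact mem_dyadicRing_iff.2 ⟨_, _, _, _, _, h⟩
  mul_mem' := by
    rintro z w hz hw
    obtain ⟨a, b, c, d, m, hm⟩ := mem_dyadicRing_iff.1 hz
    obtain ⟨a', b', c', d', l, hl⟩ := mem_dyadicRing_iff.1 hw
    have h : ((√2 : ℝ) : ℂ) ^ (m + l) * (z * w) = zOmega a b c d * zOmega a' b' c' d' := by
      rw [← hm, ← hl, pow_add]
      ring
    rw [zOmega_mul] at h
    exact mem_dyadicRing_iff.2 ⟨_, _, _, _, _, h⟩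
  neg_mem' := by
    rintro z hz
    obtain ⟨a, b, c, d, m, hm⟩ := mem_dyadicRing_iff.1 hz
    exact mem_dyadicRing_iff.2 ⟨_, _, _, _, m, by rw [mul_neg, hm, neg_zOmega]⟩

lemma conj_mem_dyadicRing {z : ℂ} (hz : z ∈ dyadicRing) : (starRingEnd ℂ) z ∈ dyadicRing := by
  obtain ⟨a, b, c, d, m, hm⟩ := mem_dyadicRing_iff.1 hz
  refine mem_dyadicRing_iff.2 ⟨a, -d, -c, -b, m, ?_⟩
  rw [← conj_zOmega, ← hm, map_mul, map_pow, conj_ofReal]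

lemma mem_dyadicRing_of_smul_mem {ι : Type*} [Fintype ι] [DecidableEq ι] [Nonempty ι]
    {U : Matrix ι ι ℂ} (hU : U ∈ Matrix.unitaryGroup ι ℂ) (hUring : ∀ i j, U i j ∈ dyadicRing)
    {x : ℂ} (hx : ∀ i j, (x • U) i j ∈ dyadicRing) : x ∈ dyadicRing := by
  obtain ⟨i⟩ := ‹Nonempty ι›
  have hrow : ∑ j, U i j * (starRingEnd ℂ) (U i j) = 1 := by
    simpa [Matrix.mul_apply] using congrFun (congrFun (Matrix.mem_unitaryGroup_iff.1 hU) i) i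
  have hx_eq : x = ∑ j, (x • U) i j * (starRingEnd ℂ) (U i j) := by
    simp_rw [Matrix.smul_apply, smul_eq_mul, mul_assoc, ← Finset.mul_sum, hrow, mul_one]
  rw [hx_eq]
  exact dyadicSubring.sum_mem fun j _ =>
    dyadicSubring.mul_mem (hx i j) (conj_mem_dyadicRing (hUring i j))

lemma omega_pow_add_four (j : ℕ) : ω ^ (j + 4) = -ω ^ j := by
  rw [pow_add, omega_pow_four, mul_neg_one]

lemma omega_pow_eight : ω ^ 8 = 1 := by
  rw [show 8 = 4 * 2 from rfl, pow_mul, omega_pow_four]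
  norm_num

lemma eq_zero_of_intCast_add_mul_sqrt_two_eq {p q r : ℤ} (h : (p : ℝ) + q * √2 = r) :
    q = 0 := by
  by_contra hq
  exact ((irrational_sqrt_two.intCast_mul hq).intCast_add p).ne_int r h

lemma exists_zOmega_eq_omega_pow_of_sq_sum_eq_one {a b c d : ℤ}
    (h : a ^ 2 + b ^ 2 + c ^ 2 + d ^ 2 = 1) : ∃ k : ℕ, zOmega a b c d = ω ^ k := by
  have hbound (x : ℤ) (hx : x ^ 2 ≤ 1) : -1 ≤ x ∧ x ≤ 1 :=
    abs_le.1 ((sq_le_one_iff_abs_le_one x).1 hx)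
  obtain ⟨ha₁, ha₂⟩ := hbound a (by linarith [sq_nonneg b, sq_nonneg c, sq_nonneg d])
  obtain ⟨hb₁, hb₂⟩ := hbound b (by linarith [sq_nonneg a, sq_nonneg c, sq_nonneg d])
  obtain ⟨hc₁, hc₂⟩ := hbound c (by linarith [sq_nonneg a, sq_nonneg b, sq_nonneg d])
  obtain ⟨hd₁, hd₂⟩ := hbound d (by linarith [sq_nonneg a, sq_nonneg b, sq_nonneg c])
  interval_cases a <;> interval_cases b <;> interval_cases c <;> interval_cases d <;>
    first
    | omega
    | (use 0; simp [zOmega]; done)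
    | (use 1; simp [zOmega]; done)
    | (use 2; simp [zOmega]; done)
    | (use 3; simp [zOmega]; done)
    | (use 0 + 4; rw [omega_pow_add_four]; simp [zOmega]; done)
    | (use 1 + 4; rw [omega_pow_add_four]; simp [zOmega]; done)
    | (use 2 + 4; rw [omega_pow_add_four]; simp [zOmega]; done)
    | (use 3 + 4; rw [omega_pow_add_four]; simp [zOmega])

lemma two_dvd_add_of_sq_sum_eq_two_pow_succ {a b c d : ℤ} {m : ℕ}
    (hQ : a ^ 2 + b ^ 2 + c ^ 2 + d ^ 2 = 2 ^ (m + 1)) (hL : a * b + b * c + c * d - d * a = 0) :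
    2 ∣ a + c ∧ 2 ∣ b + d := by
  have hprod : Even ((a + c) * (b + d)) := ⟨d * a, by linear_combination hL⟩
  have hsum : Even ((a + c) ^ 2 + (b + d) ^ 2) :=
    ⟨2 ^ m + a * c + b * d, by linear_combination hQ⟩
  rw [Int.even_mul] at hprod
  rw [Int.even_add, Int.even_pow' two_ne_zero, Int.even_pow' two_ne_zero] at hsum
  simp only [← even_iff_two_dvd]
  tauto

lemma zOmega_eq_sqrt_two_pow_mul_omega_pow (m : ℕ) {a b c d : ℤ}
    (hQ : a ^ 2 + b ^ 2 + c ^ 2 + d ^ 2 = 2 ^ m) (hL : a * b + b * c + c * d - d * a = 0) :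
    ∃ k : ℕ, zOmega a b c d = ((√2 : ℝ) : ℂ) ^ m * ω ^ k := by
  induction m generalizing a b c d with
  | zero => simpa using exists_zOmega_eq_omega_pow_of_sq_sum_eq_one hQ
  | succ m ih =>
    obtain ⟨⟨s, hs⟩, ⟨t, ht⟩⟩ := two_dvd_add_of_sq_sum_eq_two_pow_succ hQ hL
    have hQ' : (b - t) ^ 2 + s ^ 2 + t ^ 2 + (s - a) ^ 2 = 2 ^ m := by
      refine mul_left_cancel₀ (two_ne_zero (α := ℤ)) ?_
      linear_combination hQ - (2 * s - a + c) * hs - (2 * t - b + d) * ht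
    have hL' : (b - t) * s + s * t + t * (s - a) - (s - a) * (b - t) = 0 := by
      refine mul_left_cancel₀ (two_ne_zero (α := ℤ)) ?_
      linear_combination hL - (b + d) * hs - (2 * s - 2 * a) * ht
    obtain ⟨k, hk⟩ := ih hQ' hL'
    refine ⟨k, ?_⟩
    have hhalf : zOmega a b c d = ((√2 : ℝ) : ℂ) * zOmega (b - t) s t (s - a) := by
      rw [sqrt_two_mul_zOmega]
      congr 1 <;> omega
    rw [hhalf, hk, pow_succ]
    ring

lemma exists_eq_omega_pow_of_mem_dyadicRing {x : ℂ} (hx : x ∈ dyadicRing) (hnorm : ‖x‖ = 1) :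
    ∃ k : ℕ, x = ω ^ k := by
  obtain ⟨a, b, c, d, m, hm⟩ := mem_dyadicRing_iff.1 hx
  have hnormSq : ((a ^ 2 + b ^ 2 + c ^ 2 + d ^ 2 : ℤ) : ℝ)
      + (a * b + b * c + c * d - d * a : ℤ) * √2 = (2 ^ m : ℤ) := by
    have h := zOmega_mul_conj a b c d
    rw [← hm, map_mul, map_pow, conj_ofReal, mul_mul_mul_comm, ← pow_two, mul_conj', hnorm,
      ← pow_mul, pow_mul', sq_sqrt_two_complex, ofReal_one, one_pow, mul_one] at h
    exact_mod_cast h.symm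
  have hL := eq_zero_of_intCast_add_mul_sqrt_two_eq hnormSq
  rw [hL, Int.cast_zero, zero_mul, add_zero, Int.cast_inj] at hnormSq
  obtain ⟨k, hk⟩ := zOmega_eq_sqrt_two_pow_mul_omega_pow m hnormSq hL
  exact ⟨k, mul_left_cancel₀ (sqrt_two_pow_ne_zero m) (hm.trans hk)⟩

lemma exists_int_eq_mul_pi_div_four_of_exp_eq_omega_pow {θ : ℝ} {k : ℕ}
    (h : Complex.exp (I * θ) = ω ^ k) : ∃ l : ℤ, θ = l * π / 4 := by
  rw [omega_pow, Complex.exp_eq_exp_iff_exists_int] at h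
  obtain ⟨l, hl⟩ := h
  have hθ : ((θ : ℝ) : ℂ) = ((k * π / 4 + l * (2 * π) : ℝ) : ℂ) := by
    apply mul_left_cancel₀ I_ne_zero
    rw [hl]
    push_cast
    ring
  refine ⟨k + 8 * l, ?_⟩
  rw [ofReal_inj.1 hθ]
  push_cast
  ring

theorem stmt5_general (n : ℕ) (θ : ℝ)
    (U U' : Matrix (Fin (2 ^ n)) (Fin (2 ^ n)) ℂ)
    (hU : U ∈ Matrix.unitaryGroup (Fin (2 ^ n)) ℂ)
    (hUring : ∀ i j, U i j ∈ dyadicRing)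
    (hU'ring : ∀ i j, U' i j ∈ dyadicRing)
    (hphase : Complex.exp (Complex.I * (θ : ℝ)) • U = U') :
    Complex.exp (Complex.I * (θ : ℝ)) ∈ dyadicRing ∧
    (∃ k : ℤ, θ = k * Real.pi / 4) ∧
    (∃ k : Fin 8, Complex.exp (Complex.I * (θ : ℝ))
        = Complex.exp (Complex.I * (((k : ℕ) : ℝ) * Real.pi / 4 : ℝ))) := by
  have hx : Complex.exp (I * θ) ∈ dyadicRing :=
    mem_dyadicRing_of_smul_mem hU hUring (hphase ▸ hU'ring)
  obtain ⟨k, hk⟩ := exists_eq_omega_pow_of_mem_dyadicRing hx (norm_exp_I_mul_ofReal θ)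
  refine ⟨hx, exists_int_eq_mul_pi_div_four_of_exp_eq_omega_pow hk,
    ⟨k % 8, Nat.mod_lt k (by norm_num)⟩, ?_⟩
  rw [hk, pow_eq_pow_mod k omega_pow_eight, omega_pow]

/-- If two unitaries over `ℤ[1/√2, i]` differ by a global phase `e^{iθ}`,
then `e^{iθ}` lies in the ring, `θ = kπ/4` for an integer `k`, and in particular
the phase is one of exactly `8` values `e^{ikπ/4}`, `k = 0, …, 7`. -/
theorem stmt5 (n : ℕ) (θ : ℝ)
    (U U' : Matrix (Fin (2 ^ n)) (Fin (2 ^ n)) ℂ)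
    (hU : U ∈ Matrix.unitaryGroup (Fin (2 ^ n)) ℂ)
    (hU' : U' ∈ Matrix.unitaryGroup (Fin (2 ^ n)) ℂ)
    (hUring : ∀ i j, U i j ∈ dyadicRing)
    (hU'ring : ∀ i j, U' i j ∈ dyadicRing)
    (hnz : ∃ i j, U i j ≠ 0)
    (hphase : Complex.exp (Complex.I * (θ : ℝ)) • U = U') :
    Complex.exp (Complex.I * (θ : ℝ)) ∈ dyadicRing ∧
    (∃ k : ℤ, θ = k * Real.pi / 4) ∧
    (∃ k : Fin 8, Complex.exp (Complex.I * (θ : ℝ))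
        = Complex.exp (Complex.I * (((k : ℕ) : ℝ) * Real.pi / 4 : ℝ))) :=
  stmt5_general n θ U U' hU hUring hU'ring hphase
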